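/- Let B be a weakly closed class of CDFs on [0,1] each satisfying H̄(1-y) = o(y) as y → 0. Then the map (π, H) ↦ F_{π,H}, where F_{π,H}(x) = πx + (1-π)H(x), is a homeomorphism from (0,1) × B (product of Euclidean and weak topologies) onto its image F_B with the weak topology. -/

import Mathlib

/-!
Near `1` the uniform part of `F = π·U + (1-π)·H` carries all the mass: `(1 - F(1-y))/y → π`
because `H` has a thin tail there, so `π` can be read off `F`, and then `H` too.
Conversely, let `F_{π_n,H_n} → F_{π,H}` weakly and let `q` be a limit point of `π_n` in `[0,1]`.
The increments of `F_{π_n,H_n} - π_n·U = (1-π_n)·H_n` are nonnegative, so `F - q·U` is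
nondecreasing; comparing with the tail of `F` gives `q ≤ π < 1`. Hence `G = (F - q·U)/(1-q)` is a
CDF, it is the weak limit of the corresponding `H_n`, so `G ∈ B`, and `F = F_{q,G}`;
identifiability gives `q = π`. Compactness of `[0,1]` then yields `π_n → π`, and `H_n → H`.
-/

open Set Filter

/-- A cumulative distribution function of a probability measure on [0,1]. -/
def IsCDF01 (H : ℝ → ℝ) : Prop :=
  Monotone H ∧ (∀ x, x < 0 → H x = 0) ∧ (∀ x, 1 ≤ x → H x = 1) ∧
    ∀ x, ContinuousWithinAt H (Ici x) x

/-- CDF of the uniform distribution on [0,1]. -/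
noncomputable def unifCDF (x : ℝ) : ℝ := max 0 (min x 1)

/-- The mixture `π · Uniform + (1-π) · H`. -/
noncomputable def mix (p : ℝ) (H : ℝ → ℝ) (x : ℝ) : ℝ :=
  p * unifCDF x + (1 - p) * H x

/-- Weak convergence of CDFs: pointwise convergence at continuity points of the limit. -/
def WeakConv (Fn : ℕ → ℝ → ℝ) (F : ℝ → ℝ) : Prop :=
  ∀ x, ContinuousAt F x → Tendsto (fun n => Fn n x) atTop (nhds (F x))

/-- `π(F) = inf { (1 - F(λ))/(1-λ) : 0 < λ < 1 }`. -/
noncomputable def piF (F : ℝ → ℝ) : ℝ :=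
  ⨅ l : Ioo (0:ℝ) 1, (1 - F l) / (1 - l)

open Topology

lemma unifCDF_of_mem_Icc {x : ℝ} (hx : x ∈ Icc 0 1) : unifCDF x = x := by
  simp [unifCDF, min_eq_left hx.2, max_eq_right hx.1]

lemma unifCDF_of_neg {x : ℝ} (hx : x < 0) : unifCDF x = 0 := by
  simp [unifCDF, min_eq_left (hx.trans zero_lt_one).le, max_eq_left hx.le]

lemma unifCDF_of_one_le {x : ℝ} (hx : 1 ≤ x) : unifCDF x = 1 := by
  simp [unifCDF, min_eq_right hx]

lemma monotone_unifCDF : Monotone unifCDF :=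
  fun _ _ h => max_le_max le_rfl (min_le_min h le_rfl)

lemma continuous_unifCDF : Continuous unifCDF :=
  continuous_const.max (continuous_id.min continuous_const)

lemma isCDF01_mix {p : ℝ} (hp0 : 0 ≤ p) (hp1 : p ≤ 1) {H : ℝ → ℝ} (hH : IsCDF01 H) :
    IsCDF01 (mix p H) := by
  refine ⟨fun a b hab => ?_, fun x hx => ?_, fun x hx => ?_, fun x => ?_⟩
  · unfold mix
    gcongr
    · exact monotone_unifCDF hab
    · exact hH.1 hab
  · simp [mix, unifCDF_of_neg hx, hH.2.1 x hx]
  · simp [mix, unifCDF_of_one_le hx, hH.2.2.1 x hx]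
  · exact ((continuous_const.mul continuous_unifCDF).continuousWithinAt).add
      (continuousWithinAt_const.mul (hH.2.2.2 x))

noncomputable def unmix (p : ℝ) (F : ℝ → ℝ) (x : ℝ) : ℝ :=
  (F x - p * unifCDF x) / (1 - p)

lemma unmix_mix {p : ℝ} (hp : p ≠ 1) (H : ℝ → ℝ) : unmix p (mix p H) = H := by
  have : 1 - p ≠ 0 := sub_ne_zero.2 hp.symm
  funext x
  simp only [unmix, mix]
  field_simp
  ring

lemma mix_unmix {p : ℝ} (hp : p ≠ 1) (F : ℝ → ℝ) : mix p (unmix p F) = F := by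
  have : 1 - p ≠ 0 := sub_ne_zero.2 hp.symm
  funext x
  simp only [unmix, mix]
  field_simp
  ring

lemma ContinuousAt.mix {H : ℝ → ℝ} {x : ℝ} (hH : ContinuousAt H x) (p : ℝ) :
    ContinuousAt (mix p H) x :=
  (continuous_const.mul continuous_unifCDF).continuousAt.add (continuousAt_const.mul hH)

lemma ContinuousAt.unmix {F : ℝ → ℝ} {x : ℝ} (hF : ContinuousAt F x) (p : ℝ) :
    ContinuousAt (unmix p F) x :=
  (hF.sub (continuous_const.mul continuous_unifCDF).continuousAt).div_const _

lemma tendsto_tail_mix {H : ℝ → ℝ}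
    (hH : Tendsto (fun y => (1 - H (1 - y)) / y) (𝓝[>] 0) (𝓝 0)) (p : ℝ) :
    Tendsto (fun y => (1 - mix p H (1 - y)) / y) (𝓝[>] 0) (𝓝 p) := by
  have hlim : Tendsto (fun y => p + (1 - p) * ((1 - H (1 - y)) / y)) (𝓝[>] 0)
      (𝓝 (p + (1 - p) * 0)) :=
    tendsto_const_nhds.add (tendsto_const_nhds.mul hH)
  rw [mul_zero, add_zero] at hlim
  refine hlim.congr' ?_
  filter_upwards [Ioo_mem_nhdsGT (zero_lt_one' ℝ)] with y hy
  have hy0 : y ≠ 0 := hy.1.ne'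
  rw [mix, unifCDF_of_mem_Icc ⟨by linarith [hy.2], by linarith [hy.1]⟩]
  field_simp
  ring

lemma eq_of_mix_eq {p p' : ℝ} {H H' : ℝ → ℝ}
    (hH : Tendsto (fun y => (1 - H (1 - y)) / y) (𝓝[>] 0) (𝓝 0))
    (hH' : Tendsto (fun y => (1 - H' (1 - y)) / y) (𝓝[>] 0) (𝓝 0))
    (heq : mix p H = mix p' H') : p = p' :=
  tendsto_nhds_unique (tendsto_tail_mix hH p) (heq ▸ tendsto_tail_mix hH' p')

lemma monotone_of_monotoneOn_of_dense {α β : Type*} [LinearOrder α] [TopologicalSpace α]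
    [OrderTopology α] [DenselyOrdered α] [NoMaxOrder α] [FirstCountableTopology α]
    [Preorder β] [TopologicalSpace β] [OrderClosedTopology β] {f : α → β} {D : Set α}
    (hD : Dense D) (hfD : MonotoneOn f D) (hf : ∀ x, ContinuousWithinAt f (Ici x) x) :
    Monotone f := by
  have hlim : ∀ x (u : ℕ → α), (∀ n, x < u n) → Tendsto u atTop (𝓝 x) →
      Tendsto (f ∘ u) atTop (𝓝 (f x)) := fun x u hxu hu =>
    (hf x).tendsto.comp (tendsto_nhdsWithin_iff.2 ⟨hu, .of_forall fun n => (hxu n).le⟩)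
  have le_of_mem : ∀ x, ∀ e ∈ D, x < e → f x ≤ f e := by
    intro x e he hxe
    obtain ⟨u, -, hu, hux⟩ := hD.exists_seq_strictAnti_tendsto_of_lt hxe
    exact le_of_tendsto (hlim x u (fun n => (hu n).1.1) hux)
      (.of_forall fun n => hfD (hu n).2 he (hu n).1.2.le)
  intro x y hxy
  obtain ⟨u, -, hu, huy⟩ := hD.exists_seq_strictAnti_tendsto y
  exact ge_of_tendsto (hlim y u (fun n => (hu n).1) huy)
    (.of_forall fun n => le_of_mem x (u n) (hu n).2 (hxy.trans_lt (hu n).1))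

lemma WeakConv.comp_tendsto {Fn : ℕ → ℝ → ℝ} {F : ℝ → ℝ} (hW : WeakConv Fn F) {φ : ℕ → ℕ}
    (hφ : Tendsto φ atTop atTop) : WeakConv (fun n => Fn (φ n)) F :=
  fun x hx => (hW x hx).comp hφ

lemma weakConv_mix {pn : ℕ → ℝ} {Hn : ℕ → ℝ → ℝ} {p : ℝ} {H : ℝ → ℝ} (hW : WeakConv Hn H)
    (hpn : Tendsto pn atTop (𝓝 p)) (hp : p ≠ 1) :
    WeakConv (fun n => mix (pn n) (Hn n)) (mix p H) := by
  intro x hx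
  have hxH : ContinuousAt H x := unmix_mix hp H ▸ hx.unmix p
  exact (hpn.mul tendsto_const_nhds).add ((tendsto_const_nhds.sub hpn).mul (hW x hxH))

lemma weakConv_unmix {pn : ℕ → ℝ} {Hn : ℕ → ℝ → ℝ} {q : ℝ} {F : ℝ → ℝ}
    (hW : WeakConv (fun n => mix (pn n) (Hn n)) F) (hpn : Tendsto pn atTop (𝓝 q)) (hq : q ≠ 1) :
    WeakConv Hn (unmix q F) := by
  intro x hx
  have hxF : ContinuousAt F x := mix_unmix hq F ▸ hx.mix q
  have hlim : Tendsto (fun n => unmix (pn n) (mix (pn n) (Hn n)) x) atTop (𝓝 (unmix q F x)) :=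
    ((hW x hxF).sub (hpn.mul tendsto_const_nhds)).div (tendsto_const_nhds.sub hpn)
      (sub_ne_zero.2 hq.symm)
  refine hlim.congr' ?_
  filter_upwards [hpn.eventually_ne hq] with n hn
  rw [unmix_mix hn]

lemma monotone_sub_of_weakConv_mix {pn : ℕ → ℝ} {Hn : ℕ → ℝ → ℝ} {q : ℝ} {F : ℝ → ℝ}
    (hpn : ∀ n, pn n ≤ 1) (hHn : ∀ n, Monotone (Hn n)) (hq : Tendsto pn atTop (𝓝 q))
    (hF : IsCDF01 F) (hW : WeakConv (fun n => mix (pn n) (Hn n)) F) :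
    Monotone fun x => F x - q * unifCDF x := by
  have hD : Dense {x | ContinuousAt F x} := by
    simpa [compl_ofPred] using hF.1.countable_not_continuousAt.dense_compl ℝ
  refine monotone_of_monotoneOn_of_dense hD (fun a ha b hb hab => ?_) fun x =>
    (hF.2.2.2 x).sub (continuous_const.mul continuous_unifCDF).continuousWithinAt
  have hlim : ∀ x, ContinuousAt F x → Tendsto (fun n => (1 - pn n) * Hn n x) atTop
      (𝓝 (F x - q * unifCDF x)) := fun x hx =>
    ((hW x hx).sub (hq.mul tendsto_const_nhds)).congr fun n => by simp only [mix]; ring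
  exact le_of_tendsto_of_tendsto' (hlim a ha) (hlim b hb) fun n =>
    mul_le_mul_of_nonneg_left (hHn n hab) (sub_nonneg.2 (hpn n))

lemma le_of_monotone_sub {F : ℝ → ℝ} {p q : ℝ} (hmono : Monotone fun x => F x - q * unifCDF x)
    (hF1 : F 1 = 1) (hF : Tendsto (fun y => (1 - F (1 - y)) / y) (𝓝[>] 0) (𝓝 p)) : q ≤ p := by
  refine ge_of_tendsto hF ?_
  filter_upwards [Ioo_mem_nhdsGT (zero_lt_one' ℝ)] with y hy
  have h := hmono (show 1 - y ≤ 1 by linarith [hy.1])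
  simp only [hF1, unifCDF_of_one_le le_rfl] at h
  rw [unifCDF_of_mem_Icc ⟨by linarith [hy.2], by linarith [hy.1]⟩] at h
  rw [le_div_iff₀ hy.1]
  linarith

lemma isCDF01_unmix {q : ℝ} (hq : q < 1) {F : ℝ → ℝ} (hF : IsCDF01 F)
    (hmono : Monotone fun x => F x - q * unifCDF x) : IsCDF01 (unmix q F) := by
  have h1q : 0 < 1 - q := sub_pos.2 hq
  refine ⟨fun a b hab => div_le_div_of_nonneg_right (hmono hab) h1q.le,
    fun x hx => ?_, fun x hx => ?_, fun x => ?_⟩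
  · simp [unmix, hF.2.1 x hx, unifCDF_of_neg hx]
  · simp [unmix, hF.2.2.1 x hx, unifCDF_of_one_le hx, h1q.ne']
  · exact ((hF.2.2.2 x).sub
      (continuous_const.mul continuous_unifCDF).continuousWithinAt).div_const _

lemma eq_of_tendsto_of_weakConv_mix {B : Set (ℝ → ℝ)} (hBcdf : ∀ H ∈ B, IsCDF01 H)
    (hBtail : ∀ H ∈ B, Tendsto (fun y => (1 - H (1 - y)) / y) (𝓝[>] 0) (𝓝 0))
    (hBclosed : ∀ (Hn : ℕ → ℝ → ℝ) (H : ℝ → ℝ), (∀ n, Hn n ∈ B) →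
      IsCDF01 H → WeakConv Hn H → H ∈ B)
    {pn : ℕ → ℝ} {Hn : ℕ → ℝ → ℝ} (hpn : ∀ n, pn n ≤ 1) (hHn : ∀ n, Hn n ∈ B)
    {p : ℝ} (hp0 : 0 ≤ p) (hp1 : p < 1) {H : ℝ → ℝ} (hH : H ∈ B)
    (hW : WeakConv (fun n => mix (pn n) (Hn n)) (mix p H)) {q : ℝ}
    (hq : Tendsto pn atTop (𝓝 q)) : q = p := by
  have hF : IsCDF01 (mix p H) := isCDF01_mix hp0 hp1.le (hBcdf H hH)
  have hmono := monotone_sub_of_weakConv_mix hpn (fun n => (hBcdf _ (hHn n)).1) hq hF hW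
  have hq1 : q < 1 :=
    (le_of_monotone_sub hmono (hF.2.2.1 1 le_rfl) (tendsto_tail_mix (hBtail H hH) p)).trans_lt hp1
  have hG : unmix q (mix p H) ∈ B :=
    hBclosed Hn _ hHn (isCDF01_unmix hq1 hF hmono) (weakConv_unmix hW hq hq1.ne)
  exact eq_of_mix_eq (hBtail _ hG) (hBtail H hH) (mix_unmix hq1.ne _)

/-- for a weakly closed class `B` of CDFs on [0,1] with thin tails at 1,
`(π, H) ↦ πx + (1-π)H(x)` is a homeomorphism from `(0,1) × B` onto its image:
it is injective, and (sequentially, for the weak topology) continuous with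
continuous inverse. -/
theorem mixture_map_homeomorphism
    (B : Set (ℝ → ℝ))
    (hBcdf : ∀ H ∈ B, IsCDF01 H)
    (hBtail : ∀ H ∈ B,
      Tendsto (fun y => (1 - H (1 - y)) / y) (nhdsWithin 0 (Ioi (0:ℝ))) (nhds 0))
    (hBclosed : ∀ (Hn : ℕ → ℝ → ℝ) (H : ℝ → ℝ), (∀ n, Hn n ∈ B) →
      IsCDF01 H → WeakConv Hn H → H ∈ B) :
    (∀ p ∈ Ioo (0:ℝ) 1, ∀ p' ∈ Ioo (0:ℝ) 1, ∀ H ∈ B, ∀ H' ∈ B,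
      (∀ x, mix p H x = mix p' H' x) → p = p' ∧ ∀ x, H x = H' x) ∧
    (∀ (pn : ℕ → ℝ) (Hn : ℕ → ℝ → ℝ), (∀ n, pn n ∈ Ioo (0:ℝ) 1) →
      (∀ n, Hn n ∈ B) → ∀ p ∈ Ioo (0:ℝ) 1, ∀ H ∈ B,
      ((Tendsto pn atTop (nhds p) ∧ WeakConv Hn H) ↔
        WeakConv (fun n => mix (pn n) (Hn n)) (mix p H))) := by
  refine ⟨fun p hp p' _ H hH H' hH' heq => ?_, fun pn Hn hpn hHn p hp H hH => ⟨?_, fun hW => ?_⟩⟩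
  · obtain rfl : p = p' := eq_of_mix_eq (hBtail H hH) (hBtail H' hH') (funext heq)
    refine ⟨rfl, congrFun ?_⟩
    rw [← unmix_mix hp.2.ne H, funext heq, unmix_mix hp.2.ne]
  · exact fun ⟨hpt, hWH⟩ => weakConv_mix hWH hpt hp.2.ne
  · have hpt : Tendsto pn atTop (𝓝 p) := by
      refine isCompact_Icc.tendsto_nhds_of_unique_mapClusterPt
        (.of_forall fun n => Ioo_subset_Icc_self (hpn n)) fun q _ hq => ?_
      obtain ⟨φ, hφ, hφq⟩ := hq.tendsto_subseq
      exact eq_of_tendsto_of_weakConv_mix hBcdf hBtail hBclosed (fun _ => (hpn _).2.le)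
        (fun _ => hHn _) hp.1.le hp.2 hH (hW.comp_tendsto hφ.tendsto_atTop) hφq
    exact ⟨hpt, unmix_mix hp.2.ne H ▸ weakConv_unmix hW hpt hp.2.ne⟩
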